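/- arXiv:2404.14953 — 5 statements merged into one kernel-verified Lean document; each statement's English description precedes it below -/
import Mathlib

section
/- Define recursively the probability of observing a given ordered review sequence from prior x: P(x, []) = 1, P(x, like::s) = (x·p + (1−x)·q)·P(L(x), s), and P(x, dislike::s) = (x·(1−p) + (1−x)·(1−q))·P(D(x), s). Then for every x ∈ (0,1) and every Boolean list s containing ℓ likes and d dislikes, P(x, s) = x·p^ℓ·(1−p)^d + (1−x)·q^ℓ·(1−q)^d; in particular the probability of a review sequence depends only on the numbers ℓ and d and not on the order. -/
/-- The like-update of the prior `x`. -/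
noncomputable def likeUpdate (p q x : ℝ) : ℝ := x * p / (x * p + (1 - x) * q)

/-- The dislike-update of the prior `x`. -/
noncomputable def dislikeUpdate (p q x : ℝ) : ℝ :=
  x * (1 - p) / (x * (1 - p) + (1 - x) * (1 - q))

/-- The probability of observing a given ordered review sequence (true = like,
false = dislike) starting from prior `x`. -/
noncomputable def seqProb (p q : ℝ) : ℝ → List Bool → ℝ
  | _, [] => 1
  | x, true :: s => (x * p + (1 - x) * q) * seqProb p q (likeUpdate p q x) s
  | x, false :: s => (x * (1 - p) + (1 - x) * (1 - q)) * seqProb p q (dislikeUpdate p q x) s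

/-- The probability of a review sequence with `ℓ` likes and `d` dislikes equals
`x·p^ℓ·(1−p)^d + (1−x)·q^ℓ·(1−q)^d`; in particular it depends only on the numbers
`ℓ` and `d` and not on the order of the reviews. -/
theorem seqProb_eq (p q : ℝ) (hq0 : 0 < q) (hqp : q < p) (hp1 : p < 1)
    (x : ℝ) (hx : x ∈ Set.Ioo (0 : ℝ) 1) (s : List Bool) (ℓ d : ℕ)
    (hℓ : s.count true = ℓ) (hd : s.count false = d) :
    seqProb p q x s = x * p ^ ℓ * (1 - p) ^ d + (1 - x) * q ^ ℓ * (1 - q) ^ d := by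
  have hp0 : 0 < p := hq0.trans hqp
  have hq1 : q < 1 := hqp.trans hp1
  induction s generalizing x ℓ d with
  | nil =>
    simp at hℓ hd
    subst hℓ; subst hd
    simp [seqProb]
  | cons b s ih =>
    obtain ⟨hx0, hx1⟩ := hx
    have hA : 0 < x * p + (1 - x) * q :=
      add_pos (mul_pos hx0 hp0) (mul_pos (by linarith) hq0)
    have hB : 0 < x * (1 - p) + (1 - x) * (1 - q) :=
      add_pos (mul_pos hx0 (by linarith)) (mul_pos (by linarith) (by linarith))
    cases b with
    | true =>
      simp [List.count_cons] at hℓ hd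
      obtain ⟨ℓ', rfl⟩ : ∃ ℓ', ℓ = ℓ' + 1 := ⟨s.count true, hℓ.symm⟩
      have hℓ' : s.count true = ℓ' := by omega
      have hLmem : likeUpdate p q x ∈ Set.Ioo (0:ℝ) 1 := by
        constructor
        · exact div_pos (mul_pos hx0 hp0) hA
        · rw [likeUpdate, div_lt_one hA]; nlinarith
      rw [seqProb, ih (likeUpdate p q x) hLmem ℓ' d hℓ' hd]
      unfold likeUpdate
      field_simp
      ring
    | false =>
      simp [List.count_cons] at hℓ hd
      obtain ⟨d', rfl⟩ : ∃ d', d = d' + 1 := ⟨s.count false, hd.symm⟩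
      have hd' : s.count false = d' := by omega
      have hDmem : dislikeUpdate p q x ∈ Set.Ioo (0:ℝ) 1 := by
        constructor
        · exact div_pos (mul_pos hx0 (by linarith)) hB
        · rw [dislikeUpdate, div_lt_one hB]; nlinarith
      rw [seqProb, ih (dislikeUpdate p q x) hDmem ℓ d' hℓ hd']
      unfold dislikeUpdate
      field_simp
      ring
end

section
/- For every x ∈ (0,1), the set P(x) = { x_{ℓ,d} : ℓ, d nonnegative integers } is a discrete subset of ℝ (every point of P(x) has a neighborhood containing no other point of P(x)) if and only if log(p/q)/log((1−q)/(1−p)) is a rational number. -/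
/-- The updated prior after `ℓ` likes and `d` dislikes. -/
noncomputable def updatedPrior (p q x : ℝ) (ℓ d : ℕ) : ℝ :=
  x * p ^ ℓ * (1 - p) ^ d /
    (x * p ^ ℓ * (1 - p) ^ d + (1 - x) * q ^ ℓ * (1 - q) ^ d)

/-!
Writing `a = log (p / q)`, `b = log ((1 - q) / (1 - p))`, one has
`x_{ℓ,d} = sigmoid (ℓ a - d b + log (x / (1 - x)))`, and a shifted sigmoid is a topological
embedding of `ℝ`, so `P(x)` is discrete exactly when `{ℓ a - d b : ℓ, d ∈ ℕ}` is. If `a / b` is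
rational this set lies in the group generated by `a` and `b`, which is then not dense and hence
discrete. Otherwise that group is dense; an element `g` of it with `0 < g < min a b` has
coefficients of opposite signs, so `g` or `-g` is of the form `ℓ a - d b`, and `0` is not isolated.
-/

open Set Filter Topology Real

theorem isDiscrete_iff_forall_exists_mem_nhds {X : Type*} [TopologicalSpace X] {s : Set X} :
    IsDiscrete s ↔ ∀ y ∈ s, ∃ U ∈ 𝓝 y, ∀ z ∈ U, z ∈ s → z = y := by
  have key : ∀ y, {y} ∈ 𝓝[s] y ↔ ∃ U ∈ 𝓝 y, ∀ z ∈ U, z ∈ s → z = y := fun y ↦ by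
    simp [mem_nhdsWithin_iff_exists_mem_nhds_inter, subset_def]
  simp_rw [← key]
  exact ⟨fun hs y hy ↦ singleton_mem_nhdsWithin_of_mem_discrete hs hy,
    fun h ↦ .of_nhdsWithin fun y hy ↦ le_pure_iff.2 (h y hy)⟩

theorem AddSubgroup.isDiscrete_of_not_dense {G : Type*} [AddCommGroup G] [LinearOrder G]
    [IsOrderedAddMonoid G] [TopologicalSpace G] [OrderTopology G] [Archimedean G]
    {S : AddSubgroup G} (hS : ¬Dense (S : Set G)) : IsDiscrete (S : Set G) := by
  obtain ⟨ε, hε, hSε⟩ : ∃ ε > 0, ∀ g ∈ S, g ∉ Ioo 0 ε := by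
    contrapose! hS
    exact S.dense_of_not_isolated_zero hS
  refine isDiscrete_iff_forall_exists_mem_nhds.2 fun y hy ↦
    ⟨Ioo (y - ε) (y + ε), Ioo_mem_nhds (sub_lt_self y hε) (lt_add_of_pos_right y hε), ?_⟩
  rintro z ⟨hzl, hzr⟩ hz
  rcases lt_trichotomy z y with h | h | h
  · exact absurd ⟨sub_pos.2 h, sub_lt_comm.1 hzl⟩ (hSε (y - z) (S.sub_mem hy hz))
  · exact h
  · exact absurd ⟨sub_pos.2 h, sub_lt_iff_lt_add'.2 hzr⟩ (hSε (z - y) (S.sub_mem hz hy))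

def natSubCombinations (a b : ℝ) : Set ℝ := {z | ∃ ℓ d : ℕ, z = ℓ * a - d * b}

theorem natSubCombinations_subset_closure_pair (a b : ℝ) :
    natSubCombinations a b ⊆ AddSubgroup.closure {a, b} := by
  rintro _ ⟨ℓ, d, rfl⟩
  exact AddSubgroup.mem_closure_pair.2 ⟨ℓ, -d, by simp [sub_eq_add_neg]⟩

theorem mem_natSubCombinations_or_neg_mem {a b g : ℝ} (ha : 0 < a) (hb : 0 < b)
    (hg : g ∈ AddSubgroup.closure {a, b}) (hg0 : 0 < g) (hga : g < a) (hgb : g < b) :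
    g ∈ natSubCombinations a b ∨ -g ∈ natSubCombinations a b := by
  obtain ⟨m, n, rfl⟩ := AddSubgroup.mem_closure_pair.1 hg
  simp only [zsmul_eq_mul] at hg0 hga hgb ⊢
  rcases le_or_gt n 0 with hn | hn
  · obtain ⟨ℓ, rfl⟩ := Int.eq_ofNat_of_zero_le (a := m) (by
      by_contra! hm
      have hm' : (m : ℝ) ≤ 0 := by exact_mod_cast hm.le
      have hn' : (n : ℝ) ≤ 0 := by exact_mod_cast hn
      nlinarith)
    obtain ⟨d, rfl⟩ := Int.exists_eq_neg_ofNat hn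
    exact Or.inl ⟨ℓ, d, by push_cast; ring⟩
  · obtain ⟨ℓ, hℓ⟩ := Int.exists_eq_neg_ofNat (a := m) (by
      by_contra! hm
      have hm' : (1 : ℝ) ≤ m := by exact_mod_cast hm
      have hn' : (1 : ℝ) ≤ n := by exact_mod_cast hn
      nlinarith)
    obtain ⟨d, rfl⟩ := Int.eq_ofNat_of_zero_le hn.le
    exact Or.inr ⟨ℓ, d, by rw [hℓ]; push_cast; ring⟩

theorem isDiscrete_natSubCombinations_iff {a b : ℝ} (ha : 0 < a) (hb : 0 < b) :
    IsDiscrete (natSubCombinations a b) ↔ ¬Irrational (a / b) := by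
  rw [← dense_addSubgroupClosure_pair_iff]
  refine ⟨fun hS hdense ↦ ?_, fun h ↦
    (AddSubgroup.isDiscrete_of_not_dense h).mono (natSubCombinations_subset_closure_pair a b)⟩
  obtain ⟨U, hU, hU0⟩ := isDiscrete_iff_forall_exists_mem_nhds.1 hS 0 ⟨0, 0, by simp⟩
  obtain ⟨ε, hε, hball⟩ := Metric.mem_nhds_iff.1 hU
  obtain ⟨g, hg, hg0, hgε⟩ := hdense.exists_between (lt_min hε (lt_min ha hb))
  simp only [lt_min_iff] at hgε
  have hne : ∀ z ∈ natSubCombinations a b, |z| = g → False := fun z hz hzg ↦ by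
    have : z = 0 := hU0 z (hball (by simpa [hzg] using hgε.1)) hz
    simp [this] at hzg
    linarith
  rcases mem_natSubCombinations_or_neg_mem ha hb hg hg0 hgε.2.1 hgε.2.2 with h | h
  · exact hne g h (abs_of_pos hg0)
  · exact hne (-g) h (by rw [abs_neg, abs_of_pos hg0])

theorem Topology.IsEmbedding.isDiscrete_image_iff {X Y : Type*} [TopologicalSpace X]
    [TopologicalSpace Y] {f : X → Y} (hf : IsEmbedding f) {s : Set X} :
    IsDiscrete (f '' s) ↔ IsDiscrete s := by
  refine ⟨fun h ↦ ?_, fun h ↦ h.image hf.isInducing⟩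
  simpa [preimage_image_eq s hf.injective] using
    h.preimage hf.continuous.continuousOn hf.injective

theorem isEmbedding_sigmoid_add_const (c : ℝ) : IsEmbedding fun t ↦ sigmoid (t + c) :=
  (IsEmbedding.subtypeVal.comp isEmbedding_sigmoid).comp (Homeomorph.addRight c).isEmbedding

theorem updatedPrior_eq_sigmoid {p q x : ℝ} (hp : p ∈ Ioo 0 1) (hq : q ∈ Ioo 0 1)
    (hx : x ∈ Ioo 0 1) (ℓ d : ℕ) :
    updatedPrior p q x ℓ d =
      sigmoid (ℓ * log (p / q) - d * log ((1 - q) / (1 - p)) + log (x / (1 - x))) := by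
  obtain ⟨hp0, hp1⟩ := hp
  obtain ⟨hq0, hq1⟩ := hq
  obtain ⟨hx0, hx1⟩ := hx
  have h1p : 0 < 1 - p := by linarith
  have h1q : 0 < 1 - q := by linarith
  have h1x : 0 < 1 - x := by linarith
  have hexp : exp (ℓ * log (p / q) - d * log ((1 - q) / (1 - p)) + log (x / (1 - x))) =
      (p / q) ^ ℓ / ((1 - q) / (1 - p)) ^ d * (x / (1 - x)) := by
    rw [exp_add, exp_sub, exp_nat_mul, exp_nat_mul, exp_log (by positivity),
      exp_log (by positivity), exp_log (by positivity)]
  rw [updatedPrior, sigmoid_def, exp_neg, hexp, div_pow, div_pow]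
  field_simp

/-- The set of possible updated priors `P(x) = { x_{ℓ,d} : ℓ, d ∈ ℕ }` is a discrete
subset of ℝ (every point has a neighborhood containing no other point of the set)
if and only if `log(p/q)/log((1−q)/(1−p))` is rational. -/
theorem updatedPriors_discrete_iff_rational (p q : ℝ) (hq0 : 0 < q) (hqp : q < p)
    (hp1 : p < 1) (x : ℝ) (hx : x ∈ Set.Ioo (0 : ℝ) 1) :
    (∀ y ∈ {z : ℝ | ∃ ℓ d : ℕ, z = updatedPrior p q x ℓ d},
      ∃ U ∈ nhds y, ∀ z ∈ U, z ∈ {z : ℝ | ∃ ℓ d : ℕ, z = updatedPrior p q x ℓ d} → z = y)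
    ↔ ∃ r : ℚ, Real.log (p / q) / Real.log ((1 - q) / (1 - p)) = (r : ℝ) := by
  have hp : p ∈ Ioo 0 1 := ⟨hq0.trans hqp, hp1⟩
  have hq : q ∈ Ioo 0 1 := ⟨hq0, hqp.trans hp1⟩
  have ha : 0 < log (p / q) := log_pos ((one_lt_div hq0).2 hqp)
  have hb : 0 < log ((1 - q) / (1 - p)) := log_pos ((one_lt_div (by linarith)).2 (by linarith))
  have hP : {z | ∃ ℓ d : ℕ, z = updatedPrior p q x ℓ d} = (fun t ↦ sigmoid (t + log (x / (1 - x))))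
      '' natSubCombinations (log (p / q)) (log ((1 - q) / (1 - p))) := by
    ext z
    simp [natSubCombinations, updatedPrior_eq_sigmoid hp hq hx, eq_comm]
  rw [← isDiscrete_iff_forall_exists_mem_nhds, hP,
    (isEmbedding_sigmoid_add_const _).isDiscrete_image_iff,
    isDiscrete_natSubCombinations_iff ha hb, Irrational, not_not]
  simp [eq_comm]
end

section
/- Let δ ∈ (0,1) and c < p. Suppose V : ℝ → ℝ satisfies, for all x in some left neighborhood (1−η, 1] of 1 (with η > 0), the recursion V(x) = (x·p + (1−x)·q − c) + δ·(x·p + (1−x)·q)·V(L(x)) + δ·(x·(1−p) + (1−x)·(1−q))·V(D(x)), where L(1) = D(1) = 1. If V is differentiable at 1 from within [0,1], then V(1) = (p − c)/(1 − δ) and the (one-sided) derivative of V at 1 equals (p − q)/(1 − δ). -/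
open Set Topology

theorem hasDerivAt_mul_add_one_sub_mul (a b x : ℝ) :
    HasDerivAt (fun x : ℝ => x * a + (1 - x) * b) (a - b) x := by
  have h := ((hasDerivAt_id x).mul_const a).add (((hasDerivAt_id x).const_sub 1).mul_const b)
  exact h.congr_deriv (by ring)

theorem dislikeUpdate_eq_likeUpdate (p q : ℝ) :
    dislikeUpdate p q = likeUpdate (1 - p) (1 - q) := rfl

section likeUpdate

variable {a b : ℝ}

theorem likeUpdate_one (ha : a ≠ 0) (b : ℝ) : likeUpdate a b 1 = 1 := by
  simp [likeUpdate, ha]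

theorem hasDerivAt_likeUpdate_one (ha : a ≠ 0) (b : ℝ) :
    HasDerivAt (likeUpdate a b) (b / a) 1 := by
  have hden : (1 : ℝ) * a + (1 - 1) * b ≠ 0 := by simpa using ha
  have h := ((hasDerivAt_id (1 : ℝ)).mul_const a).div (hasDerivAt_mul_add_one_sub_mul a b 1) hden
  refine h.congr_deriv ?_
  simp only [id, one_mul, sub_self, zero_mul, add_zero]
  field_simp
  ring

theorem mapsTo_likeUpdate_Icc (ha : 0 < a) (hb : 0 < b) :
    MapsTo (likeUpdate a b) (Icc 0 1) (Icc 0 1) := by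
  rintro x ⟨hx0, hx1⟩
  have hden : 0 < x * a + (1 - x) * b := by
    rcases hx0.eq_or_lt with rfl | hx0
    · simpa using hb
    · nlinarith
  refine ⟨div_nonneg (by positivity) hden.le, (div_le_one hden).2 (by nlinarith)⟩

theorem HasDerivWithinAt.comp_likeUpdate_one {V : ℝ → ℝ} {v : ℝ}
    (hV : HasDerivWithinAt V v (Icc 0 1) 1) (ha : 0 < a) (hb : 0 < b) :
    HasDerivWithinAt (fun x => V (likeUpdate a b x)) (v * (b / a)) (Icc 0 1) 1 := by
  have hV' : HasDerivWithinAt V v (Icc 0 1) (likeUpdate a b 1) := by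
    rwa [likeUpdate_one ha.ne' b]
  exact hV'.comp 1 (hasDerivAt_likeUpdate_one ha.ne' b).hasDerivWithinAt
    (mapsTo_likeUpdate_Icc ha hb)

end likeUpdate

noncomputable def bellmanRHS (p q c δ : ℝ) (V : ℝ → ℝ) (x : ℝ) : ℝ :=
  (x * p + (1 - x) * q - c)
    + δ * (x * p + (1 - x) * q) * V (likeUpdate p q x)
    + δ * (x * (1 - p) + (1 - x) * (1 - q)) * V (dislikeUpdate p q x)

section bellmanRHS

variable {p q : ℝ} (c δ : ℝ) (V : ℝ → ℝ)

theorem bellmanRHS_one (hp0 : p ≠ 0) (hp1 : p ≠ 1) :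
    bellmanRHS p q c δ V 1 = p - c + δ * V 1 := by
  rw [bellmanRHS, likeUpdate_one hp0, dislikeUpdate_eq_likeUpdate,
    likeUpdate_one (sub_ne_zero.2 hp1.symm)]
  ring

theorem hasDerivWithinAt_bellmanRHS_one (hq0 : 0 < q) (hqp : q < p) (hp1 : p < 1) {v : ℝ}
    (hV : HasDerivWithinAt V v (Icc 0 1) 1) :
    HasDerivWithinAt (bellmanRHS p q c δ V) (p - q + δ * v) (Icc 0 1) 1 := by
  have hp0 : 0 < p := hq0.trans hqp
  have hlike := hV.comp_likeUpdate_one hp0 hq0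
  have hdislike := hV.comp_likeUpdate_one (a := 1 - p) (b := 1 - q) (by linarith) (by linarith)
  have hlin := fun a b => (hasDerivAt_mul_add_one_sub_mul a b 1).hasDerivWithinAt (s := Icc 0 1)
  have h := (((hlin p q).sub_const c).add (((hlin p q).const_mul δ).mul hlike)).add
    (((hlin (1 - p) (1 - q)).const_mul δ).mul hdislike)
  refine h.congr_deriv ?_
  have hp1' : 1 - p ≠ 0 := by linarith
  rw [likeUpdate_one hp0.ne', likeUpdate_one hp1']
  field_simp
  ring

end bellmanRHS

theorem value_and_deriv_at_one_general (p q c δ : ℝ) (hq0 : 0 < q) (hqp : q < p) (hp1 : p < 1)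
    (hδ1 : δ < 1)
    (V : ℝ → ℝ) (η : ℝ) (hη : 0 < η)
    (hrec : ∀ x ∈ Set.Ioc (1 - η) 1,
      V x = (x * p + (1 - x) * q - c)
        + δ * (x * p + (1 - x) * q) * V (likeUpdate p q x)
        + δ * (x * (1 - p) + (1 - x) * (1 - q)) * V (dislikeUpdate p q x))
    (hdiff : DifferentiableWithinAt ℝ V (Set.Icc 0 1) 1) :
    V 1 = (p - c) / (1 - δ) ∧
      derivWithin V (Set.Icc 0 1) 1 = (p - q) / (1 - δ) := by
  have hδ : 1 - δ ≠ 0 := by linarith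
  have h1 : (1 : ℝ) ∈ Ioc (1 - η) 1 := ⟨by linarith, le_rfl⟩
  have hV1 : V 1 = p - c + δ * V 1 :=
    (hrec 1 h1).trans (bellmanRHS_one c δ V (hq0.trans hqp).ne' hp1.ne)
  have hnear : V =ᶠ[𝓝[Icc 0 1] 1] bellmanRHS p q c δ V := by
    have : Ioc (1 - η) 1 ∈ 𝓝[Icc 0 1] (1 : ℝ) :=
      mem_nhdsWithin.2
        ⟨Ioi (1 - η), isOpen_Ioi, by simpa using hη, fun x hx => ⟨hx.1, hx.2.2⟩⟩
    filter_upwards [this] with x hx using hrec x hx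
  set v := derivWithin V (Icc 0 1) 1
  have hderiv : HasDerivWithinAt V (p - q + δ * v) (Icc 0 1) 1 :=
    (hasDerivWithinAt_bellmanRHS_one c δ V hq0 hqp hp1
      hdiff.hasDerivWithinAt).congr_of_eventuallyEq hnear (hrec 1 h1)
  have hv : v = p - q + δ * v :=
    hderiv.derivWithin (uniqueDiffOn_Icc one_pos 1 ⟨zero_le_one, le_rfl⟩)
  constructor <;> field_simp <;> linarith

/-- If `V` satisfies the dynamic-pricing recursion on a left neighborhood `(1−η, 1]`
of `1` and is differentiable at `1` from within `[0,1]`, then `V(1) = (p−c)/(1−δ)` and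
the one-sided derivative of `V` at `1` equals `(p−q)/(1−δ)`. -/
theorem value_and_deriv_at_one (p q c δ : ℝ) (hq0 : 0 < q) (hqp : q < p) (hp1 : p < 1)
    (hqc : q < c) (hcp : c < p) (hδ0 : 0 < δ) (hδ1 : δ < 1)
    (V : ℝ → ℝ) (η : ℝ) (hη : 0 < η)
    (hrec : ∀ x ∈ Set.Ioc (1 - η) 1,
      V x = (x * p + (1 - x) * q - c)
        + δ * (x * p + (1 - x) * q) * V (likeUpdate p q x)
        + δ * (x * (1 - p) + (1 - x) * (1 - q)) * V (dislikeUpdate p q x))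
    (hdiff : DifferentiableWithinAt ℝ V (Set.Icc 0 1) 1) :
    V 1 = (p - c) / (1 - δ) ∧
      derivWithin V (Set.Icc 0 1) 1 = (p - q) / (1 - δ) :=
  value_and_deriv_at_one_general p q c δ hq0 hqp hp1 hδ1 V η hη hrec hdiff
end

section
/- Let (X_t)_{t ∈ ℕ} be a martingale on a filtered probability space with 0 ≤ X_t ≤ 1 almost surely and X_0 = x almost surely for a constant x ∈ (0,1). Let s, d0 be reals with 0 < d0 < s < x, and let τ = inf{ t : X_t < s } be the hitting time of [0, s). Assume that almost surely on the event {τ < ∞} one has X_τ ≥ d0, and that almost surely on the event {τ = ∞} the sequence X_t converges to 1. Then (x − s)/(1 − s) ≤ ℙ(τ = ∞) ≤ (x − d0)/(1 − d0). -/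
/-!
Stop `X` at the first time `τ` it drops below `s`. The stopped process is a bounded martingale
started at `x`, and it converges a.s. to `Z`, which is `1` on `{τ = ∞}` and `X_τ ∈ [d0, s)` on
`{τ < ∞}`; by dominated convergence `𝔼 Z = x`. With `p = ℙ(τ = ∞)` this gives
`p + d0 (1 - p) ≤ x ≤ p + s (1 - p)`, which rearranges to the two bounds.
-/

open Filter Topology

namespace MeasureTheory

variable {Ω : Type*} {m0 : MeasurableSpace Ω} {μ : Measure Ω}

lemma exists_hittingAfter_eq_of_ne_top {ι β : Type*} [ConditionallyCompleteLinearOrder ι]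
    [WellFoundedLT ι] {u : ι → Ω → β} {S : Set β} {n : ι} {ω : Ω}
    (h : hittingAfter u S n ω ≠ ⊤) :
    ∃ t : ι, hittingAfter u S n ω = t ∧ u t ω ∈ S ∧ ∀ k, n ≤ k → k < t → u k ω ∉ S := by
  obtain ⟨t, ht⟩ := WithTop.ne_top_iff_exists.1 h
  have hmem := hittingAfter_mem_set_of_ne_top h
  rw [← ht] at hmem
  exact ⟨t, ht.symm, hmem, fun k hnk hkt ↦
    notMem_of_lt_hittingAfter (ht ▸ WithTop.coe_lt_coe.2 hkt) hnk⟩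

lemma tendsto_stoppedProcess_ite {ι β : Type*} [LinearOrder ι] [Nonempty ι] [TopologicalSpace β]
    {u : ι → Ω → β} {τ : Ω → WithTop ι} {ω : Ω} {c : β}
    (hu : τ ω = ⊤ → Tendsto (u · ω) atTop (𝓝 c)) :
    Tendsto (fun i ↦ stoppedProcess u τ i ω) atTop
      (𝓝 (if τ ω = ⊤ then c else stoppedValue u τ ω)) := by
  by_cases h : τ ω = ⊤
  · simpa only [if_pos h, stoppedProcess_eq_of_le (h ▸ le_top)] using hu h
  · rw [if_neg h]
    lift τ ω to ι using h with t ht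
    exact tendsto_atTop_of_eventually_const fun i (hi : t ≤ i) ↦
      stoppedProcess_eq_of_ge (ht ▸ WithTop.coe_le_coe.2 hi)

section Martingale

variable {ℱ : Filtration ℕ m0} {f : ℕ → Ω → ℝ}

lemma Martingale.stoppedProcess [SigmaFiniteFiltration μ ℱ] {τ : Ω → WithTop ℕ}
    (hf : Martingale f ℱ μ) (hτ : IsStoppingTime ℱ τ) :
    Martingale (stoppedProcess f τ) ℱ μ :=
  martingale_iff.2 ⟨by simpa using (hf.neg.submartingale.stoppedProcess hτ).neg,
    hf.submartingale.stoppedProcess hτ⟩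

lemma Martingale.integrable_and_integral_eq_of_tendsto [IsFiniteMeasure μ] {g : Ω → ℝ} {C : ℝ}
    (hf : Martingale f ℱ μ) (hbdd : ∀ᵐ ω ∂μ, ∀ n, |f n ω| ≤ C)
    (hlim : ∀ᵐ ω ∂μ, Tendsto (fun n ↦ f n ω) atTop (𝓝 (g ω))) :
    Integrable g μ ∧ ∫ ω, g ω ∂μ = ∫ ω, f 0 ω ∂μ := by
  have hmeas : ∀ n, AEStronglyMeasurable (f n) μ := fun n ↦ (hf.integrable n).1
  have hg : Integrable g μ := by
    refine (integrable_const C).mono' (aestronglyMeasurable_of_tendsto_ae atTop hmeas hlim) ?_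
    filter_upwards [hbdd, hlim] with ω hω hωlim
    exact le_of_tendsto' hωlim.norm hω
  have hconst : ∀ n, ∫ ω, f n ω ∂μ = ∫ ω, f 0 ω ∂μ := fun n ↦ by
    simpa using (hf.setIntegral_eq n.zero_le MeasurableSet.univ).symm
  have hDCT := tendsto_integral_of_dominated_convergence (fun _ ↦ C) hmeas
    (integrable_const C) (fun n ↦ hbdd.mono fun ω hω ↦ hω n) hlim
  simp only [hconst] at hDCT
  exact ⟨hg, tendsto_nhds_unique hDCT tendsto_const_nhds⟩

lemma Martingale.integral_ite_stoppedValue_eq [IsFiniteMeasure μ] {τ : Ω → WithTop ℕ} {c C : ℝ}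
    (hf : Martingale f ℱ μ) (hτ : IsStoppingTime ℱ τ) (hbdd : ∀ᵐ ω ∂μ, ∀ n, |f n ω| ≤ C)
    (hlim : ∀ᵐ ω ∂μ, τ ω = ⊤ → Tendsto (fun n ↦ f n ω) atTop (𝓝 c)) :
    Integrable (fun ω ↦ if τ ω = ⊤ then c else stoppedValue f τ ω) μ ∧
      ∫ ω, (if τ ω = ⊤ then c else stoppedValue f τ ω) ∂μ = ∫ ω, f 0 ω ∂μ := by
  obtain ⟨hg, hint⟩ := (hf.stoppedProcess hτ).integrable_and_integral_eq_of_tendsto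
    (hbdd.mono fun ω hω n ↦ hω _) (hlim.mono fun ω hω ↦ tendsto_stoppedProcess_ite hω)
  exact ⟨hg, hint.trans (integral_congr_ae (ae_of_all _ fun ω ↦ stoppedProcess_eq_of_le (by simp)))⟩

end Martingale

section SplitIntegral

variable [IsFiniteMeasure μ] {A : Set Ω} {g : Ω → ℝ} {a b c : ℝ}

lemma le_integral_of_ae_eq_on_of_ae_le_on_compl (hA : MeasurableSet A) (hg : Integrable g μ)
    (hgA : ∀ᵐ ω ∂μ, ω ∈ A → g ω = c) (hgAc : ∀ᵐ ω ∂μ, ω ∉ A → a ≤ g ω) :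
    c * μ.real A + a * μ.real Aᶜ ≤ ∫ ω, g ω ∂μ := by
  rw [← integral_add_compl hA hg, setIntegral_congr_ae hA hgA, setIntegral_const, smul_eq_mul,
    mul_comm]
  gcongr
  simpa [mul_comm] using setIntegral_mono_on_ae (integrableOn_const (measure_ne_top _ _))
    hg.integrableOn hA.compl hgAc

lemma integral_le_of_ae_eq_on_of_ae_le_on_compl (hA : MeasurableSet A) (hg : Integrable g μ)
    (hgA : ∀ᵐ ω ∂μ, ω ∈ A → g ω = c) (hgAc : ∀ᵐ ω ∂μ, ω ∉ A → g ω ≤ b) :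
    ∫ ω, g ω ∂μ ≤ c * μ.real A + b * μ.real Aᶜ := by
  have := le_integral_of_ae_eq_on_of_ae_le_on_compl (a := -b) (c := -c) hA hg.neg
    (hgA.mono fun ω h hω ↦ by simp [h hω]) (hgAc.mono fun ω h hω ↦ neg_le_neg (h hω))
  simp only [Pi.neg_apply, integral_neg] at this
  linarith

end SplitIntegral

end MeasureTheory

open MeasureTheory

theorem martingale_selling_forever_bounds_general
    {Ω : Type*} {m0 : MeasurableSpace Ω} (μ : Measure Ω) [IsProbabilityMeasure μ]
    (ℱ : Filtration ℕ m0) (X : ℕ → Ω → ℝ)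
    (hmart : Martingale X ℱ μ)
    (hbdd : ∀ t, ∀ᵐ ω ∂μ, X t ω ∈ Set.Icc (0 : ℝ) 1)
    (x s d0 : ℝ) (hx : x ∈ Set.Ioo (0 : ℝ) 1) (hd0s : d0 < s) (hsx : s < x)
    (hX0 : ∀ᵐ ω ∂μ, X 0 ω = x)
    (hstop : ∀ᵐ ω ∂μ, ∀ t : ℕ, (X t ω < s ∧ ∀ u < t, s ≤ X u ω) → d0 ≤ X t ω)
    (hconv : ∀ᵐ ω ∂μ, (∀ t, s ≤ X t ω) →
      Filter.Tendsto (fun t => X t ω) Filter.atTop (nhds 1)) :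
    (x - s) / (1 - s) ≤ (μ {ω | ∀ t, s ≤ X t ω}).toReal ∧
      (μ {ω | ∀ t, s ≤ X t ω}).toReal ≤ (x - d0) / (1 - d0) := by
  set τ := hittingAfter X (Set.Iio s) 0
  have hτ : IsStoppingTime ℱ τ :=
    hmart.stronglyAdapted.adapted.isStoppingTime_hittingAfter measurableSet_Iio
  have hA : {ω | ∀ t, s ≤ X t ω} = {ω | τ ω = ⊤} := by
    ext ω; simp [τ, hittingAfter_eq_top_iff]
  have hτA : MeasurableSet {ω | τ ω = ⊤} := hτ.measurableSet_eq_top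
  set Z := fun ω ↦ if τ ω = ⊤ then (1 : ℝ) else stoppedValue X τ ω
  obtain ⟨hZ, hZx⟩ := hmart.integral_ite_stoppedValue_eq hτ (C := 1)
    ((ae_all_iff.2 hbdd).mono fun ω hω n ↦ abs_le.2 ⟨by linarith [(hω n).1], (hω n).2⟩)
    (hconv.mono fun ω hω h ↦ hω (hA.ge h))
  rw [integral_congr_ae hX0, integral_const, probReal_univ, one_smul] at hZx
  have hZA : ∀ᵐ ω ∂μ, ω ∈ {ω | τ ω = ⊤} → Z ω = 1 := ae_of_all _ fun ω h ↦ if_pos h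
  have hZAc : ∀ᵐ ω ∂μ, ω ∉ {ω | τ ω = ⊤} → d0 ≤ Z ω ∧ Z ω ≤ s := by
    filter_upwards [hstop] with ω hω h
    obtain ⟨t, ht, hlt, hbefore⟩ := exists_hittingAfter_eq_of_ne_top h
    have hZt : Z ω = X t ω := by
      simp only [Z, if_neg h, stoppedValue, show τ ω = t from ht]
      rfl
    exact hZt ▸ ⟨hω t ⟨hlt, fun u hu ↦ not_lt.1 (hbefore u u.zero_le hu)⟩, hlt.le⟩
  have hlow := le_integral_of_ae_eq_on_of_ae_le_on_compl hτA hZ hZA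
    (hZAc.mono fun ω h hω ↦ (h hω).1)
  have hup := integral_le_of_ae_eq_on_of_ae_le_on_compl hτA hZ hZA
    (hZAc.mono fun ω h hω ↦ (h hω).2)
  rw [probReal_compl_eq_one_sub hτA] at hlow hup
  rw [hA, ← measureReal_def, div_le_iff₀ (by linarith [hx.2]), le_div_iff₀ (by linarith [hx.2])]
  constructor <;> linarith

/-- Optional-stopping bounds for learning: if `X` is a `[0,1]`-valued martingale started
at `x`, `τ` is the hitting time of `[0, s)` (described via first hitting below `s`),
`X_τ ≥ d0` a.s. on `{τ < ∞}`, and `X_t → 1` a.s. on `{τ = ∞}`, then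
`(x − s)/(1 − s) ≤ ℙ(τ = ∞) ≤ (x − d0)/(1 − d0)`. The event `{τ = ∞}` is the event
that `X` never goes below `s`. -/
theorem martingale_selling_forever_bounds
    {Ω : Type*} {m0 : MeasurableSpace Ω} (μ : Measure Ω) [IsProbabilityMeasure μ]
    (ℱ : Filtration ℕ m0) (X : ℕ → Ω → ℝ)
    (hmart : Martingale X ℱ μ)
    (hbdd : ∀ t, ∀ᵐ ω ∂μ, X t ω ∈ Set.Icc (0 : ℝ) 1)
    (x s d0 : ℝ) (hx : x ∈ Set.Ioo (0 : ℝ) 1) (hd0 : 0 < d0) (hd0s : d0 < s) (hsx : s < x)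
    (hX0 : ∀ᵐ ω ∂μ, X 0 ω = x)
    (hstop : ∀ᵐ ω ∂μ, ∀ t : ℕ, (X t ω < s ∧ ∀ u < t, s ≤ X u ω) → d0 ≤ X t ω)
    (hconv : ∀ᵐ ω ∂μ, (∀ t, s ≤ X t ω) →
      Filter.Tendsto (fun t => X t ω) Filter.atTop (nhds 1)) :
    (x - s) / (1 - s) ≤ (μ {ω | ∀ t, s ≤ X t ω}).toReal ∧
      (μ {ω | ∀ t, s ≤ X t ω}).toReal ≤ (x - d0) / (1 - d0) :=
  martingale_selling_forever_bounds_general μ ℱ X hmart hbdd x s d0 hx hd0s hsx hX0 hstop hconv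
end

section
/- Let (X_t)_{t ∈ ℕ} be a martingale on a filtered probability space with 0 ≤ X_t ≤ 1 almost surely and X_0 = x almost surely for a constant x ∈ (0,1). Let s ∈ (0, x) and τ = inf{ t : X_t < s }. Assume that almost surely on {τ = ∞} the sequence X_t converges to 1, and let G be a measurable event with ℙ(G) = x such that, up to a null set, {τ = ∞} ⊆ G. Then the conditional probability satisfies ℙ(τ = ∞ ∣ G) ≥ (x − s)/(x·(1 − s)). -/
open MeasureTheory ProbabilityTheory Filter

/-!
Optional stopping at the first time `X` drops below `s`, capped at `t`, gives
`x ≤ s + (1 - s) ℙ(s ≤ X_k for all k ≤ t)`: the stopped value is `< s` if the drop happened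
and `≤ 1` otherwise. Letting `t → ∞` yields `ℙ(τ = ∞) ≥ (x - s) / (1 - s)`, and
`ℙ(τ = ∞ ∣ G) = ℙ(τ = ∞) / x` because `{τ = ∞} ⊆ G` up to a null set.
-/

namespace MeasureTheory.Submartingale

variable {Ω : Type*} {m0 : MeasurableSpace Ω} {μ : Measure Ω}
  {ℱ : Filtration ℕ m0} {X : ℕ → Ω → ℝ}

lemma measurableSet_forall_le_le (hX : Submartingale X ℱ μ) (s : ℝ) (t : ℕ) :
    MeasurableSet {ω | ∀ k ≤ t, s ≤ X k ω} := by
  simp only [Set.ofPred_forall]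
  exact .iInter fun k => .iInter fun _ =>
    measurableSet_le measurable_const ((hX.stronglyAdapted k).mono (ℱ.le k)).measurable

variable [IsProbabilityMeasure μ]

lemma integral_zero_le_add_mul_measureReal_forall_le_le (hX : Submartingale X ℱ μ) {b : ℝ}
    (hb : ∀ k, ∀ᵐ ω ∂μ, X k ω ≤ b) (s : ℝ) (t : ℕ) :
    μ[X 0] ≤ s + (b - s) * μ.real {ω | ∀ k ≤ t, s ≤ X k ω} := by
  set C := {ω | ∀ k ≤ t, s ≤ X k ω}
  have hC : MeasurableSet C := hX.measurableSet_forall_le_le s t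
  set τ : Ω → WithTop ℕ := fun ω => (hittingBtwn X (Set.Iio s) 0 t ω : ℕ)
  have hτ : IsStoppingTime ℱ τ :=
    hX.stronglyAdapted.adapted.isStoppingTime_hittingBtwn measurableSet_Iio
  have hτt : ∀ ω, τ ω ≤ t := fun ω => WithTop.coe_le_coe.2 (hittingBtwn_le ω)
  have hstop : μ[X 0] ≤ μ[stoppedValue X τ] := by
    have := hX.expected_stoppedValue_mono (isStoppingTime_const ℱ 0) hτ (fun ω => bot_le) hτt
    rwa [stoppedValue_const] at this
  have hg : Integrable (fun ω => s + C.indicator (fun _ => b - s) ω) μ :=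
    (integrable_const s).add ((integrable_const (b - s)).indicator hC)
  have hbound : stoppedValue X τ ≤ᵐ[μ] fun ω => s + C.indicator (fun _ => b - s) ω := by
    filter_upwards [ae_all_iff.2 hb] with ω hω
    by_cases hωC : ω ∈ C
    · rw [Set.indicator_of_mem hωC, add_sub_cancel]
      exact hω _
    · simp only [C, Set.mem_ofPred_eq, not_forall, not_le] at hωC
      obtain ⟨k, hk, hks⟩ := hωC
      have hdrop : stoppedValue X τ ω ∈ Set.Iio s :=
        stoppedValue_hittingBtwn_mem ⟨k, ⟨Nat.zero_le k, hk⟩, hks⟩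
      rw [Set.indicator_of_notMem (fun h => (h k hk).not_gt hks), add_zero]
      exact le_of_lt hdrop
  calc μ[X 0] ≤ μ[stoppedValue X τ] := hstop
    _ ≤ ∫ ω, s + C.indicator (fun _ => b - s) ω ∂μ :=
      integral_mono_ae (f := stoppedValue X τ)
        (integrable_stoppedValue ℕ hτ hX.integrable hτt) hg hbound
    _ = s + (b - s) * μ.real C := by
      rw [integral_add (integrable_const s) ((integrable_const _).indicator hC),
        integral_indicator_const _ hC]
      simp [mul_comm]

lemma integral_zero_le_add_mul_measureReal_forall_le (hX : Submartingale X ℱ μ) {b : ℝ}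
    (hb : ∀ k, ∀ᵐ ω ∂μ, X k ω ≤ b) (s : ℝ) :
    μ[X 0] ≤ s + (b - s) * μ.real {ω | ∀ k, s ≤ X k ω} := by
  have hanti : Antitone fun t => {ω | ∀ k ≤ t, s ≤ X k ω} :=
    fun _ _ hmn _ hω k hk => hω k (hk.trans hmn)
  have hinter : (⋂ t, {ω | ∀ k ≤ t, s ≤ X k ω}) = {ω | ∀ k, s ≤ X k ω} := by
    ext ω
    simp only [Set.mem_iInter, Set.mem_ofPred_eq]
    exact ⟨fun h k => h k k le_rfl, fun h _ k _ => h k⟩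
  have hlim : Tendsto (fun t => μ.real {ω | ∀ k ≤ t, s ≤ X k ω}) atTop
      (nhds (μ.real {ω | ∀ k, s ≤ X k ω})) := by
    rw [← hinter]
    exact (ENNReal.tendsto_toReal (measure_ne_top μ _)).comp <| tendsto_measure_iInter_atTop
      (fun t => (hX.measurableSet_forall_le_le s t).nullMeasurableSet) hanti
      ⟨0, measure_ne_top μ _⟩
  exact ge_of_tendsto' (tendsto_const_nhds.add (hlim.const_mul (b - s)))
    (hX.integral_zero_le_add_mul_measureReal_forall_le_le hb s)

end MeasureTheory.Submartingale

lemma ProbabilityTheory.cond_apply_of_measure_diff_eq_zero {Ω : Type*} {m0 : MeasurableSpace Ω}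
    (μ : Measure Ω) {A G : Set Ω} (hG : MeasurableSet G) (hAG : μ (A \ G) = 0) :
    μ[A|G] = (μ G)⁻¹ * μ A := by
  rw [cond_apply hG, Set.inter_comm, measure_inter_conull' hAG]

theorem conditional_prob_selling_forever_general
    {Ω : Type*} {m0 : MeasurableSpace Ω} (μ : Measure Ω) [IsProbabilityMeasure μ]
    (ℱ : Filtration ℕ m0) (X : ℕ → Ω → ℝ)
    (hmart : Martingale X ℱ μ)
    (hbdd : ∀ t, ∀ᵐ ω ∂μ, X t ω ∈ Set.Icc (0 : ℝ) 1)
    (x s : ℝ) (hx : x ∈ Set.Ioo (0 : ℝ) 1) (hsx : s < x)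
    (hX0 : ∀ᵐ ω ∂μ, X 0 ω = x)
    (G : Set Ω) (hGmeas : MeasurableSet G) (hGx : μ G = ENNReal.ofReal x)
    (hsub : μ ({ω | ∀ t, s ≤ X t ω} \ G) = 0) :
    (x - s) / (x * (1 - s)) ≤ (μ[|G] {ω | ∀ t, s ≤ X t ω}).toReal := by
  obtain ⟨hx0, hx1⟩ := hx
  set A := {ω | ∀ t, s ≤ X t ω}
  have hsurvive : x ≤ s + (1 - s) * μ.real A := by
    have h := hmart.submartingale.integral_zero_le_add_mul_measureReal_forall_le
      (fun t => (hbdd t).mono fun _ hω => hω.2) s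
    rwa [integral_congr_ae hX0, integral_const, probReal_univ, one_smul] at h
  have hcond : (μ[|G] A).toReal = μ.real A / x := by
    rw [cond_apply_of_measure_diff_eq_zero μ hGmeas hsub, ENNReal.toReal_mul, ENNReal.toReal_inv,
      hGx, ENNReal.toReal_ofReal hx0.le, inv_mul_eq_div, measureReal_def]
  rw [hcond, mul_comm x, ← div_div]
  refine div_le_div_of_nonneg_right ?_ hx0.le
  rw [div_le_iff₀ (by linarith)]
  linarith

/-- If `X` is a `[0,1]`-valued martingale started at `x`, `{τ = ∞}` is the event that
`X` never goes below `s`, on this event `X_t → 1` a.s., and `G` is an event with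
`ℙ(G) = x` containing `{τ = ∞}` up to a null set, then
`ℙ(τ = ∞ ∣ G) ≥ (x − s)/(x·(1 − s))`. -/
theorem conditional_prob_selling_forever
    {Ω : Type*} {m0 : MeasurableSpace Ω} (μ : Measure Ω) [IsProbabilityMeasure μ]
    (ℱ : Filtration ℕ m0) (X : ℕ → Ω → ℝ)
    (hmart : Martingale X ℱ μ)
    (hbdd : ∀ t, ∀ᵐ ω ∂μ, X t ω ∈ Set.Icc (0 : ℝ) 1)
    (x s : ℝ) (hx : x ∈ Set.Ioo (0 : ℝ) 1) (hs0 : 0 < s) (hsx : s < x)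
    (hX0 : ∀ᵐ ω ∂μ, X 0 ω = x)
    (hconv : ∀ᵐ ω ∂μ, (∀ t, s ≤ X t ω) →
      Filter.Tendsto (fun t => X t ω) Filter.atTop (nhds 1))
    (G : Set Ω) (hGmeas : MeasurableSet G) (hGx : μ G = ENNReal.ofReal x)
    (hsub : μ ({ω | ∀ t, s ≤ X t ω} \ G) = 0) :
    (x - s) / (x * (1 - s)) ≤ (μ[|G] {ω | ∀ t, s ≤ X t ω}).toReal :=
  conditional_prob_selling_forever_general μ ℱ X hmart hbdd x s hx hsx hX0 G hGmeas hGx hsub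
end
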